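/- arXiv:1306.1043 — 3 statements merged into one kernel-verified Lean document; each statement's English description precedes it below -/
import Mathlib

section
/- For two DAGs G and H, SID(G,H) = 0 if and only if G is a subgraph of H (i.e., every edge of G is an edge of H). -/
/-- A partially directed graph over `Fin p` is an edge relation `E ⊆ V²`.
The Structural Hamming Distance counts unordered pairs `{i,j}` of distinct
vertices whose edge type (none, `i→j`, `j→i`, undirected) differs. -/
noncomputable def shd {p : ℕ} (G H : Fin p → Fin p → Prop) : ℕ :=
  {q : Fin p × Fin p | q.1 < q.2 ∧
    ¬ ((G q.1 q.2 ↔ H q.1 q.2) ∧ (G q.2 q.1 ↔ H q.2 q.1))}.ncard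

/-- A directed graph is acyclic if no vertex lies on a directed cycle. -/
def Acyclic {V : Type*} (E : V → V → Prop) : Prop :=
  ∀ i, ¬ Relation.TransGen E i i

/-- Two vertices are adjacent if there is an edge in either direction. -/
def Adjacent {V : Type*} (E : V → V → Prop) (a b : V) : Prop := E a b ∨ E b a

/-- A path from `X` to `Y`: a list of at least two distinct vertices,
consecutive ones adjacent, starting at `X` and ending at `Y`. -/
def IsPath {V : Type*} (E : V → V → Prop) (X Y : V) (l : List V) : Prop :=
  l.Nodup ∧ l.Chain' (Adjacent E) ∧ l.head? = some X ∧ l.getLast? = some Y ∧ 2 ≤ l.length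

/-- A path `l` is blocked by `S` if some interior node `b` (with path-neighbours
`a` and `c`) satisfies: either `b ∈ S` and `b` is a non-collider on the path, or
`b` is a collider on the path and neither `b` nor any of its descendants is in `S`. -/
def BlockedPath {V : Type*} (E : V → V → Prop) (S : Set V) (l : List V) : Prop :=
  ∃ (l₁ : List V) (a b c : V) (l₂ : List V), l = l₁ ++ a :: b :: c :: l₂ ∧
    ((b ∈ S ∧ ¬ (E a b ∧ E c b)) ∨
     ((E a b ∧ E c b) ∧ b ∉ S ∧ ∀ d, Relation.TransGen E b d → d ∉ S))

/-- The parent set of a vertex. -/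
def parents {V : Type*} (E : V → V → Prop) (i : V) : Set V := {j | E j i}

/-- Criterion (*): no element of `Z` is a descendant of any `W` lying on a
directed path from `X` to `Y`, and `Z` blocks all non-directed paths from `X` to `Y`. -/
def ValidAdjustment {V : Type*} (E : V → V → Prop) (Z : Set V) (X Y : V) : Prop :=
  (∀ z ∈ Z, ∀ W, Relation.TransGen E X W → Relation.ReflTransGen E W Y →
      ¬ Relation.ReflTransGen E W z) ∧
  (∀ l, IsPath E X Y l → ¬ l.Chain' E → BlockedPath E Z l)

/-- Structural Intervention Distance: the number of ordered pairs `(i,j)`, `i ≠ j`,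
such that either `j` is a parent of `i` in `H` and a descendant of `i` in `G`, or
`j` is not a parent of `i` in `H` and `Pa_H(i)` fails criterion (*) for `(G,i,j)`. -/
noncomputable def sid {p : ℕ} (G H : Fin p → Fin p → Prop) : ℕ :=
  {q : Fin p × Fin p | q.1 ≠ q.2 ∧
    ((q.2 ∈ parents H q.1 ∧ Relation.TransGen G q.1 q.2) ∨
     (q.2 ∉ parents H q.1 ∧ ¬ ValidAdjustment G (parents H q.1) q.1 q.2))}.ncard

/-!
If `G ≤ H`, then `Pa_H(i)` contains `Pa_G(i)`, and acyclicity of `H` makes every element of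
`Pa_H(i)` a non-descendant of `i` in `G`. Such a set satisfies criterion (*): a non-directed
path from `i` either leaves `i` through a parent, which is then a blocking non-collider, or
starts with a directed run that eventually turns into a collider whose descendants are all
descendants of `i`, hence outside `Pa_H(i)`. Conversely, an edge `a → b` of `G` missing from `H`
is counted by `sid`: if `b → a` is in `H` then `b` is an `H`-parent and a `G`-descendant of `a`,
and otherwise the two-vertex path `b ← a` is non-directed and cannot be blocked.
-/

open Relation

theorem Acyclic.ne {V : Type*} {G : V → V → Prop} (hG : Acyclic G) {a b : V} (hab : G a b) :
    a ≠ b :=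
  fun h => hG a (.single (h ▸ hab))

theorem Acyclic.asymm {V : Type*} {G : V → V → Prop} (hG : Acyclic G) {a b : V} (hab : G a b) :
    ¬ G b a :=
  fun hba => hG a (.tail (.single hab) hba)

theorem Acyclic.not_transGen_to_parent {V : Type*} {G H : V → V → Prop} (hH : Acyclic H)
    (hGH : ∀ a b, G a b → H a b) {i z : V} (hz : z ∈ parents H i) : ¬ TransGen G i z :=
  fun hiz => hH i ((TransGen.mono hGH _ _ hiz).tail hz)

theorem exists_collider_of_not_chain {V : Type*} (G : V → V → Prop) :
    ∀ (t : List V) {a b : V}, G a b → (a :: b :: t).IsChain (Adjacent G) →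
      ¬ (a :: b :: t).IsChain G →
      ∃ (l₁ : List V) (x y z : V) (l₂ : List V), a :: b :: t = l₁ ++ x :: y :: z :: l₂ ∧
        G x y ∧ G z y ∧ TransGen G a y
  | [], _, _, hab, _, hnc => absurd (List.isChain_pair.mpr hab) hnc
  | c :: t, a, b, hab, hadj, hnc => by
    rw [List.isChain_cons_cons] at hadj
    by_cases hbc : G b c
    · have hrest : ¬ (b :: c :: t).IsChain G := fun h => hnc (List.isChain_cons_cons.mpr ⟨hab, h⟩)
      obtain ⟨l₁, x, y, z, l₂, heq, hxy, hzy, hby⟩ :=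
        exists_collider_of_not_chain G t hbc hadj.2 hrest
      exact ⟨a :: l₁, x, y, z, l₂, by rw [List.cons_append, heq], hxy, hzy, .head hab hby⟩
    · have hcb : G c b := (List.isChain_cons_cons.mp hadj.2).1.resolve_left hbc
      exact ⟨[], a, b, c, t, rfl, hab, hcb, .single hab⟩

theorem blockedPath_of_nondescendants {V : Type*} {G : V → V → Prop} {S : Set V} {X Y : V}
    (hS : ∀ z ∈ S, ¬ TransGen G X z) (hpa : ∀ v, G v X → v ∈ S) (hY : Y ∉ S)
    {l : List V} (hl : IsPath G X Y l) (hnc : ¬ l.IsChain G) : BlockedPath G S l := by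
  obtain ⟨-, hadj, hhead, hlast, hlen⟩ := hl
  obtain _ | ⟨X', _ | ⟨v, t⟩⟩ := l
  · simp at hlen
  · simp at hlen
  obtain rfl : X = X' := (by simpa using hhead : X' = X).symm
  by_cases hXv : G X v
  · obtain ⟨l₁, x, y, z, l₂, heq, hxy, hzy, hXy⟩ := exists_collider_of_not_chain G t hXv hadj hnc
    exact ⟨l₁, x, y, z, l₂, heq,
      .inr ⟨⟨hxy, hzy⟩, fun hy => hS y hy hXy, fun d hyd hd => hS d hd (hXy.trans hyd)⟩⟩
  · have hv : v ∈ S := hpa v ((List.isChain_cons_cons.mp hadj).1.resolve_left hXv)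
    obtain _ | ⟨c, t⟩ := t
    · obtain rfl : v = Y := by simpa using hlast
      exact absurd hv hY
    · exact ⟨[], X, v, c, t, rfl, .inl ⟨hv, fun h => hXv h.1⟩⟩

theorem not_blockedPath_pair {V : Type*} (G : V → V → Prop) (S : Set V) (a b : V) :
    ¬ BlockedPath G S [a, b] := by
  rintro ⟨l₁, x, y, z, l₂, heq, -⟩
  have hlen := congrArg List.length heq
  simp only [List.length_append, List.length_cons, List.length_nil] at hlen
  omega

theorem not_validAdjustment_of_edge {V : Type*} {G : V → V → Prop} (hG : Acyclic G)
    {a b : V} (hab : G a b) (Z : Set V) : ¬ ValidAdjustment G Z b a := by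
  intro hZ
  have hpath : IsPath G b a [b, a] :=
    ⟨by simpa using (hG.ne hab).symm, List.isChain_pair.mpr (.inr hab), rfl, rfl, le_rfl⟩
  exact not_blockedPath_pair G Z b a
    (hZ.2 _ hpath fun h => hG.asymm hab (List.isChain_pair.mp h))

theorem validAdjustment_parents_of_le {V : Type*} {G H : V → V → Prop} (hH : Acyclic H)
    (hGH : ∀ a b, G a b → H a b) {i j : V} (hj : j ∉ parents H i) :
    ValidAdjustment G (parents H i) i j := by
  have hnd : ∀ z ∈ parents H i, ¬ TransGen G i z := fun _ hz =>
    hH.not_transGen_to_parent hGH hz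
  exact ⟨fun z hz _ hiW _ hWz => hnd z hz (hiW.trans_left hWz),
    fun _ hl hnc => blockedPath_of_nondescendants hnd (hGH · i) hj hl hnc⟩

/-- For two DAGs G and H, SID(G,H) = 0 iff G is a subgraph of H. -/
theorem sid_eq_zero_iff_subgraph {p : ℕ} (G H : Fin p → Fin p → Prop)
    (hG : Acyclic G) (hH : Acyclic H) :
    sid G H = 0 ↔ ∀ a b, G a b → H a b := by
  rw [sid, Set.ncard_eq_zero (Set.toFinite _), Set.eq_empty_iff_forall_notMem]
  constructor
  · intro hsid a b hab
    by_contra hHab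
    by_cases hHba : H b a
    · exact hsid (a, b) ⟨hG.ne hab, .inl ⟨hHba, .single hab⟩⟩
    · exact hsid (b, a) ⟨(hG.ne hab).symm, .inr ⟨hHab, not_validAdjustment_of_edge hG hab _⟩⟩
  · rintro hGH ⟨i, j⟩ ⟨-, ⟨hji, hij⟩ | ⟨hj, hnot⟩⟩
    · exact hH.not_transGen_to_parent hGH hji hij
    · exact hnot (validAdjustment_parents_of_le hH hGH hj)
end

section
/- If SHD(G,H) = 1 for two DAGs G, H on p vertices, then SID(G,H) ≤ 2(p-1), and this bound is sharp: for every p ≥ 3 there exist DAGs G, H on p vertices with SHD(G,H) = 1 and SID(G,H) = 2(p-1). -/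
/-! If `G` and `H` differ only in the edge between `a` and `b`, every other vertex has the same
parents in both graphs, and in a DAG the parents of `i` are a valid adjustment set for every
non-parent `j`. Hence only the `2 (p - 1)` pairs whose first vertex is `a` or `b` can be counted.

Equality holds for `G` with edges `a → b` and `a → v`, `b → v` for every other `v`, and `H` equal
to `G` with `a → b` reversed: `Pa_H(a) = {b}` lies on a directed path `a → b → v` (or is the
descendant `b` itself), and `Pa_H(b) = ∅` leaves the paths `b ← a` and `b ← a → v` open. -/

open Finset Relation

section Graphs

variable {V : Type*}

lemma acyclic_of_rank {α : Type*} [Preorder α] {E : V → V → Prop} (f : V → α)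
    (hf : ∀ i j, E i j → f i < f j) : Acyclic E := fun i hi =>
  lt_irrefl (f i) (by simpa [transGen_eq_self] using hi.lift f hf)

lemma exists_collider_of_not_isChain {E : V → V → Prop} :
    ∀ (l : List V) (x y : V), E x y → (x :: y :: l).IsChain (Adjacent E) →
      ¬ (x :: y :: l).IsChain E →
      ∃ l₁ a b c l₂, x :: y :: l = l₁ ++ a :: b :: c :: l₂ ∧ E a b ∧ E c b ∧ TransGen E x b
  | [], _, _, hxy, _, hnc => absurd (List.isChain_pair.mpr hxy) hnc
  | z :: l, x, y, hxy, hadj, hnc => by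
    rw [List.isChain_cons_cons] at hadj
    by_cases hyz : E y z
    · obtain ⟨l₁, a, b, c, l₂, heq, hab, hcb, hyb⟩ := exists_collider_of_not_isChain l y z hyz
        hadj.2 fun h => hnc (List.isChain_cons_cons.mpr ⟨hxy, h⟩)
      exact ⟨x :: l₁, a, b, c, l₂, by rw [heq]; rfl, hab, hcb, .head hxy hyb⟩
    · have hzy : E z y := ((List.isChain_cons_cons.mp hadj.2).1).resolve_left hyz
      exact ⟨[], x, y, z, l, rfl, hxy, hzy, .single hxy⟩

lemma not_blockedPath_pair_s12 (E : V → V → Prop) (S : Set V) (x y : V) :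
    ¬ BlockedPath E S [x, y] := by
  rintro ⟨l₁, a, b, c, l₂, heq, -⟩
  have := congrArg List.length heq
  simp at this
  omega

lemma not_blockedPath_triple {E : V → V → Prop} {S : Set V} {x y z : V} (hy : y ∉ S)
    (hcoll : ¬ (E x y ∧ E z y)) : ¬ BlockedPath E S [x, y, z] := by
  rintro ⟨l₁, a, b, c, l₂, heq, hblock⟩
  obtain ⟨rfl, rfl, rfl, -⟩ : x = a ∧ y = b ∧ z = c ∧ l₂ = [] := by
    rcases l₁ with _ | ⟨w, l₁⟩
    · simpa using heq
    · have := congrArg List.length heq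
      simp at this
      omega
  rcases hblock with ⟨hb, -⟩ | ⟨hc, -⟩
  exacts [hy hb, hcoll hc]

/-- A non-directed path out of `i` either starts at a parent of `i`, which is then a
non-collider, or contains a collider that is a descendant of `i`; and in a DAG no descendant of `i`
is a parent of `i`. -/
lemma validAdjustment_parents {G : V → V → Prop} (hG : Acyclic G) {i j : V}
    (hj : j ∉ parents G i) : ValidAdjustment G (parents G i) i j := by
  refine ⟨fun z hz W hiW _ hWz => hG i ((hiW.trans_left hWz).tail hz), ?_⟩
  rintro l ⟨-, hadj, hhead, hlast, hlen⟩ hnc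
  match l, hhead, hlast, hlen with
  | [_, y], rfl, hlast, _ =>
    obtain rfl : y = j := by simpa using hlast
    have hnij : ¬ G i y := fun h => hnc (List.isChain_pair.mpr h)
    exact (hj ((List.isChain_pair.mp hadj).resolve_left hnij)).elim
  | _ :: y :: z :: t, rfl, _, _ =>
    by_cases hyi : G y i
    · exact ⟨[], i, y, z, t, rfl, .inl ⟨hyi, fun h => hG i (.head h.1 (.single hyi))⟩⟩
    · have hiy : G i y := ((List.isChain_cons_cons.mp hadj).1).resolve_right hyi
      obtain ⟨l₁, a, b, c, l₂, heq, hab, hcb, hib⟩ :=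
        exists_collider_of_not_isChain (z :: t) i y hiy hadj hnc
      exact ⟨l₁, a, b, c, l₂, heq, .inr ⟨⟨hab, hcb⟩, fun hb => hG i (hib.tail hb),
        fun d hbd hd => hG i ((hib.trans hbd).tail hd)⟩⟩

/-- The pairs counted by `sid G H`: adjusting for `Pa_H(i)` gives a wrong interventional
distribution of `j` under `do(i)` in `G`. -/
def IsSIDError (G H : V → V → Prop) (i j : V) : Prop :=
  (j ∈ parents H i ∧ TransGen G i j) ∨
    (j ∉ parents H i ∧ ¬ ValidAdjustment G (parents H i) i j)

lemma not_isSIDError_of_parents_eq {G H : V → V → Prop} (hG : Acyclic G) {i j : V}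
    (h : parents H i = parents G i) : ¬ IsSIDError G H i j := by
  rw [IsSIDError, h]
  rintro (⟨hj, hij⟩ | ⟨hj, hinvalid⟩)
  exacts [hG i (hij.tail hj), hinvalid (validAdjustment_parents hG hj)]

lemma ncard_offDiag_fst_mem [Fintype V] (s : Set V) :
    {q : V × V | q.1 ∈ s ∧ q.1 ≠ q.2}.ncard = s.ncard * (Nat.card V - 1) := by
  classical
  have hrow (a : V) : #{b | a ≠ b} = Nat.card V - 1 := by
    rw [filter_ne, card_erase_of_mem (mem_univ a), card_univ, Nat.card_eq_fintype_card]
  have hset : {q : V × V | q.1 ∈ s ∧ q.1 ≠ q.2} =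
      ↑({q ∈ s.toFinset ×ˢ univ | q.1 ≠ q.2} : Finset (V × V)) := by
    ext; simp
  rw [hset, Set.ncard_coe_finset, card_filter, sum_product, Set.ncard_eq_toFinset_card']
  simp_rw [← card_filter, hrow, sum_const, smul_eq_mul]

def reverseEdge (E : V → V → Prop) (a b : V) : V → V → Prop :=
  fun u v => (E u v ∧ ¬ (u = a ∧ v = b)) ∨ (u = b ∧ v = a)

def edgeCone (a b : V) : V → V → Prop :=
  fun u v => (u = a ∧ v ≠ a) ∨ (u = b ∧ v ≠ a ∧ v ≠ b)

section EdgeCone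

variable {a b : V}

lemma acyclic_edgeCone : Acyclic (edgeCone a b) := by
  classical
  refine acyclic_of_rank (fun v => if v = a then 0 else if v = b then 1 else 2) ?_
  rintro u v (⟨rfl, hv⟩ | ⟨rfl, hva, hvb⟩) <;> grind

lemma acyclic_reverseEdge_edgeCone (hab : a ≠ b) :
    Acyclic (reverseEdge (edgeCone a b) a b) := by
  classical
  refine acyclic_of_rank (fun v => if v = b then 0 else if v = a then 1 else 2) ?_
  rintro u v (⟨⟨rfl, hv⟩ | ⟨rfl, hva, hvb⟩, hne⟩ | ⟨rfl, rfl⟩) <;> grind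

lemma parents_reverseEdge_edgeCone_left :
    parents (reverseEdge (edgeCone a b) a b) a = {b} := by
  ext; simp [parents, reverseEdge, edgeCone]

lemma parents_reverseEdge_edgeCone_right (hab : a ≠ b) :
    parents (reverseEdge (edgeCone a b) a b) b = ∅ := by
  ext; simp [parents, reverseEdge, edgeCone, hab.symm]

lemma isSIDError_edgeCone_left (hab : a ≠ b) {j : V} (hj : a ≠ j) :
    IsSIDError (edgeCone a b) (reverseEdge (edgeCone a b) a b) a j := by
  have hab' : edgeCone a b a b := .inl ⟨rfl, hab.symm⟩
  rw [IsSIDError, parents_reverseEdge_edgeCone_left]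
  by_cases hjb : j = b
  · subst hjb
    exact .inl ⟨rfl, .single hab'⟩
  · have hbj : edgeCone a b b j := .inr ⟨rfl, hj.symm, hjb⟩
    exact .inr ⟨hjb, fun hvalid => hvalid.1 b rfl b (.single hab') (.single hbj) .refl⟩

lemma isSIDError_edgeCone_right (hab : a ≠ b) {j : V} (hj : b ≠ j) :
    IsSIDError (edgeCone a b) (reverseEdge (edgeCone a b) a b) b j := by
  rw [IsSIDError, parents_reverseEdge_edgeCone_right hab]
  refine .inr ⟨Set.notMem_empty j, fun hvalid => ?_⟩
  have hab' : edgeCone a b a b := .inl ⟨rfl, hab.symm⟩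
  have hba : ¬ edgeCone a b b a := by simp [edgeCone]
  by_cases hja : j = a
  · subst hja
    refine not_blockedPath_pair_s12 _ _ b j (hvalid.2 [b, j] ?_ ?_)
    · exact ⟨by simpa using hj, List.isChain_pair.mpr (.inr hab'), rfl, rfl, le_rfl⟩
    · exact fun h => hba (List.isChain_pair.mp h)
  · have haj : edgeCone a b a j := .inl ⟨rfl, hja⟩
    refine not_blockedPath_triple (Set.notMem_empty a) (fun h => hba h.1) (hvalid.2 [b, a, j] ?_ ?_)
    · exact ⟨by simp [hab.symm, hj, Ne.symm hja],
        List.isChain_cons_cons.mpr ⟨.inr hab', List.isChain_pair.mpr (.inl haj)⟩, rfl, rfl, by simp⟩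
    · exact fun h => hba (List.isChain_cons_cons.mp h).1

end EdgeCone

end Graphs

section FinGraphs

variable {p : ℕ}

lemma ncard_offDiag_fst_mem_pair {a b : Fin p} (hab : a ≠ b) :
    {q : Fin p × Fin p | q.1 ∈ ({a, b} : Set _) ∧ q.1 ≠ q.2}.ncard = 2 * (p - 1) := by
  rw [ncard_offDiag_fst_mem, Set.ncard_pair hab, Nat.card_eq_fintype_card, Fintype.card_fin]

lemma sid_eq_ncard_isSIDError (G H : Fin p → Fin p → Prop) :
    sid G H = {q : Fin p × Fin p | q.1 ≠ q.2 ∧ IsSIDError G H q.1 q.2}.ncard :=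
  rfl

lemma exists_parents_eq_of_shd_eq_one {G H : Fin p → Fin p → Prop} (hG : Acyclic G)
    (hH : Acyclic H) (h : shd G H = 1) :
    ∃ a b : Fin p, a ≠ b ∧ ∀ i, i ≠ a → i ≠ b → parents H i = parents G i := by
  obtain ⟨⟨a, b⟩, hdiff⟩ := Set.ncard_eq_one.mp h
  rw [Set.eq_singleton_iff_unique_mem] at hdiff
  have hab : a < b := hdiff.1.1
  refine ⟨a, b, hab.ne, fun i hia hib => ?_⟩
  have hagree (u v : Fin p) (huv : u < v) (hi : u = i ∨ v = i) :
      (G u v ↔ H u v) ∧ (G v u ↔ H v u) := by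
    by_contra hne
    have := hdiff.2 (u, v) ⟨huv, hne⟩
    simp only [Prod.mk.injEq] at this
    grind
  ext j
  rcases lt_trichotomy j i with hji | rfl | hij
  · exact (hagree j i hji (.inr rfl)).1.symm
  · exact iff_of_false (fun h => hH j (.single h)) (fun h => hG j (.single h))
  · exact (hagree i j hij (.inl rfl)).2.symm

lemma sid_le_of_shd_eq_one {G H : Fin p → Fin p → Prop} (hG : Acyclic G) (hH : Acyclic H)
    (h : shd G H = 1) : sid G H ≤ 2 * (p - 1) := by
  obtain ⟨a, b, hab, hpar⟩ := exists_parents_eq_of_shd_eq_one hG hH h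
  calc sid G H ≤ {q : Fin p × Fin p | q.1 ∈ ({a, b} : Set _) ∧ q.1 ≠ q.2}.ncard := by
        rw [sid_eq_ncard_isSIDError]
        refine Set.ncard_le_ncard ?_ (Set.toFinite _)
        rintro ⟨i, j⟩ ⟨hij, herr⟩
        refine ⟨?_, hij⟩
        by_contra hi
        simp only [Set.mem_insert_iff, Set.mem_singleton_iff, not_or] at hi
        exact not_isSIDError_of_parents_eq hG (hpar i hi.1 hi.2) herr
    _ = 2 * (p - 1) := ncard_offDiag_fst_mem_pair hab

lemma shd_reverseEdge {G : Fin p → Fin p → Prop} {a b : Fin p} (hab : a < b) (h : G a b) :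
    shd G (reverseEdge G a b) = 1 := by
  refine Set.ncard_eq_one.mpr ⟨(a, b), ?_⟩
  ext ⟨u, v⟩
  simp only [Set.mem_ofPred_eq, Set.mem_singleton_iff, Prod.mk.injEq, reverseEdge]
  grind

end FinGraphs

/-- If SHD(G,H) = 1 for DAGs on p vertices then SID(G,H) ≤ 2(p-1); this bound
is sharp: for every p ≥ 3 it is attained by some pair of DAGs. -/
theorem sid_le_of_shd_eq_one_and_sharp :
    (∀ (p : ℕ) (G H : Fin p → Fin p → Prop), Acyclic G → Acyclic H →
      shd G H = 1 → sid G H ≤ 2 * (p - 1)) ∧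
    (∀ p : ℕ, 3 ≤ p → ∃ G H : Fin p → Fin p → Prop, Acyclic G ∧ Acyclic H ∧
      shd G H = 1 ∧ sid G H = 2 * (p - 1)) := by
  refine ⟨fun _ _ _ => sid_le_of_shd_eq_one, fun p hp => ?_⟩
  let a : Fin p := ⟨0, by omega⟩
  let b : Fin p := ⟨1, by omega⟩
  have hab : a < b := Fin.mk_lt_mk.mpr zero_lt_one
  have hG := acyclic_edgeCone (a := a) (b := b)
  have hH := acyclic_reverseEdge_edgeCone hab.ne
  have hshd := shd_reverseEdge (G := edgeCone a b) hab (.inl ⟨rfl, hab.ne'⟩ : edgeCone a b a b)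
  refine ⟨_, _, hG, hH, hshd, le_antisymm (sid_le_of_shd_eq_one hG hH hshd) ?_⟩
  rw [← ncard_offDiag_fst_mem_pair hab.ne, sid_eq_ncard_isSIDError]
  refine Set.ncard_le_ncard ?_ (Set.toFinite _)
  rintro ⟨i, j⟩ ⟨rfl | rfl, hij⟩
  exacts [⟨hij, isSIDError_edgeCone_left hab.ne hij⟩, ⟨hij, isSIDError_edgeCone_right hab.ne hij⟩]
end

section
/- There exist DAGs G and H on p vertices with SID(G,H) = 0 and SHD(G,H) = p(p-1)/2 (the maximal value); hence SHD cannot be bounded by any function of SID. Concretely, take G the empty DAG and H any fully connected DAG. -/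
/-! The empty graph has no edges, hence no directed paths and no paths at all: every pair of
vertices passes the adjustment criterion for whatever parent sets `H` proposes, so
`SID(∅, H) = 0`. Against the total order `i < j`, the empty graph differs on every pair. -/

theorem not_isPath_empty {V : Type*} {X Y : V} {l : List V} :
    ¬ IsPath (fun _ _ : V => False) X Y l := by
  rintro ⟨-, hchain, -, -, hlen⟩
  match l, hlen with
  | _ :: _ :: _, _ => exact (List.isChain_cons_cons.mp hchain).1.elim id id

theorem not_transGen_empty {V : Type*} {a b : V} :
    ¬ Relation.TransGen (fun _ _ : V => False) a b :=
  fun h => (Relation.TransGen.head'_iff.mp h).elim fun _ hc => hc.1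

theorem acyclic_empty {V : Type*} : Acyclic (fun _ _ : V => False) :=
  fun _ => not_transGen_empty

theorem acyclic_of_isStrictOrder {V : Type*} (E : V → V → Prop) [IsStrictOrder V E] :
    Acyclic E :=
  fun i h => irrefl i (by rwa [Relation.transGen_eq_self] at h)

theorem validAdjustment_empty {V : Type*} (Z : Set V) (X Y : V) :
    ValidAdjustment (fun _ _ : V => False) Z X Y :=
  ⟨fun _ _ _ hXW _ _ => not_transGen_empty hXW, fun _ hl _ => (not_isPath_empty hl).elim⟩

theorem sid_empty_left {p : ℕ} (H : Fin p → Fin p → Prop) : sid (fun _ _ => False) H = 0 := by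
  refine (congrArg Set.ncard (Set.eq_empty_of_forall_notMem ?_)).trans (Set.ncard_empty _)
  rintro q ⟨-, ⟨-, hG⟩ | ⟨-, hinvalid⟩⟩
  · exact not_transGen_empty hG
  · exact hinvalid (validAdjustment_empty _ _ _)

theorem shd_empty_lt (p : ℕ) : shd (fun _ _ => False) (fun i j : Fin p => i < j) = p.choose 2 := by
  have hpairs : {q : Fin p × Fin p | q.1 < q.2 ∧
      ¬ ((False ↔ q.1 < q.2) ∧ (False ↔ q.2 < q.1))} = {q | q.1 < q.2} := by
    ext q
    simp only [Set.mem_ofPred_eq, false_iff, and_iff_left_iff_imp]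
    exact fun h hc => hc.1 h
  rw [shd, hpairs, ← Finset.coe_filter_univ, Set.ncard_coe_finset,
    Fintype.card_product_filter_lt, Fintype.card_fin]

/-- There exist DAGs G and H on p vertices with SID(G,H) = 0 and SHD(G,H)
maximal, equal to p(p-1)/2: take G the empty DAG and H a fully connected DAG.
Hence SHD cannot be bounded by any function of SID. -/
theorem sid_zero_shd_maximal (p : ℕ) :
    ∃ G H : Fin p → Fin p → Prop, Acyclic G ∧ Acyclic H ∧
      sid G H = 0 ∧ shd G H = p * (p - 1) / 2 :=
  ⟨_, _, acyclic_empty, acyclic_of_isStrictOrder (· < ·), sid_empty_left _,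
    (shd_empty_lt p).trans (Nat.choose_two_right p)⟩
end
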